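/- arXiv:1810.00447 — 12 statements merged into one kernel-verified Lean document; each statement's English description precedes it below -/
import Mathlib

section
/- Let p ∈ (0,1), ε ∈ (0,1), λ ∈ (0,1], and let n, n₁ be real numbers with n₁ ≤ n and n₁ > (4/p²)·log(1/ε); write L = log(1/ε). Let R, R₁, Z be real numbers with 0 ≤ Z ≤ R, |R − n·p| < √(n·L), |R₁ − n₁·p| < √(n₁·L), and |Z − λ·n·p| < √(λ·n·L). Then R > 0 and | (Z·R₁)/R − λ·p·n₁ | < 4·√(n₁·L). -/
set_option maxHeartbeats 1000000 in
/-- Deterministic core of the lemma controlling the conditional expectation `Z·R₁/R`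
of the hypergeometric count: if the binomial counts `R`, `R₁`, `Z` lie within
square-root-size windows of their means, then `R > 0` and
`|Z·R₁/R − λ·p·n₁| < 4·√(n₁·log(1/ε))`. -/
theorem hypergeometric_mean_estimate
    (p ε lam n n₁ R R₁ Z : ℝ)
    (hp : p ∈ Set.Ioo (0 : ℝ) 1) (hε : ε ∈ Set.Ioo (0 : ℝ) 1)
    (hlam : lam ∈ Set.Ioc (0 : ℝ) 1)
    (hn₁n : n₁ ≤ n) (hn₁ : n₁ > 4 / p ^ 2 * Real.log (1 / ε))
    (hZ0 : 0 ≤ Z) (hZR : Z ≤ R)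
    (hR : |R - n * p| < Real.sqrt (n * Real.log (1 / ε)))
    (hR₁ : |R₁ - n₁ * p| < Real.sqrt (n₁ * Real.log (1 / ε)))
    (hZ : |Z - lam * n * p| < Real.sqrt (lam * n * Real.log (1 / ε))) :
    0 < R ∧ |Z * R₁ / R - lam * p * n₁| < 4 * Real.sqrt (n₁ * Real.log (1 / ε)) := by
  obtain ⟨hp0, hp1⟩ := hp
  obtain ⟨hε0, hε1⟩ := hε
  obtain ⟨hlam0, hlam1⟩ := hlam
  set L := Real.log (1 / ε) with hLdef
  have hL : 0 < L := Real.log_pos (by rw [lt_div_iff₀ hε0]; linarith)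
  have hn₁0 : 0 < n₁ := lt_trans (by positivity) hn₁
  have hn0 : 0 < n := lt_of_lt_of_le hn₁0 hn₁n
  set s := Real.sqrt (n₁ * L) with hsdef
  set t := Real.sqrt (n * L) with htdef
  set μ := Real.sqrt lam with hμdef
  have hs0 : 0 < s := Real.sqrt_pos.mpr (by positivity)
  have ht0 : 0 < t := Real.sqrt_pos.mpr (by positivity)
  have hμ0 : 0 < μ := Real.sqrt_pos.mpr hlam0
  have hμ1 : μ ≤ 1 := by
    rw [hμdef, show (1:ℝ) = Real.sqrt 1 by simp]
    exact Real.sqrt_le_sqrt hlam1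
  have hμ2 : μ ^ 2 = lam := Real.sq_sqrt hlam0.le
  have hu : Real.sqrt (lam * n * L) = μ * t := by
    rw [hμdef, htdef, mul_assoc, Real.sqrt_mul hlam0.le]
  have hs2 : s ^ 2 = n₁ * L := Real.sq_sqrt (by positivity)
  have ht2 : t ^ 2 = n * L := Real.sq_sqrt (by positivity)
  clear_value L s t μ
  have hLp : 4 * L < n₁ * p ^ 2 := by
    have h := hn₁
    rw [gt_iff_lt, div_mul_eq_mul_div, div_lt_iff₀ (by positivity : (0:ℝ) < p ^ 2)] at h
    linarith
  have hF1 : 2 * s < n₁ * p := by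
    have hsq : (2 * s) ^ 2 < (n₁ * p) ^ 2 := by
      rw [mul_pow, mul_pow, hs2]; nlinarith
    exact lt_of_pow_lt_pow_left₀ 2 (by positivity) hsq
  have hF2 : t * n₁ ≤ s * n := by
    have hsq : (t * n₁) ^ 2 ≤ (s * n) ^ 2 := by
      rw [mul_pow, mul_pow, hs2, ht2]
      nlinarith [mul_nonneg (mul_nonneg hL.le hn₁0.le) (mul_nonneg hn0.le (sub_nonneg.mpr hn₁n))]
    exact le_of_pow_le_pow_left₀ two_ne_zero (by positivity) hsq
  have h2t : 2 * t < n * p := by nlinarith [mul_lt_mul_of_pos_right hF1 hn0]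
  rw [abs_lt] at hR hR₁
  rw [hu, abs_lt] at hZ
  have hR0 : 0 < R := by linarith [hR.1, h2t, ht0]
  have hR₁0 : 0 < R₁ := by linarith [hR₁.1, hF1, hs0]
  refine ⟨hR0, ?_⟩
  rw [abs_lt]
  constructor
  · -- lower bound
    have hlow : (lam * p * n₁ - 4 * s) * R < Z * R₁ := by
      rcases lt_or_ge (lam * p * n₁) (4 * s) with hc | hc
      · have h1 : (lam * p * n₁ - 4 * s) * R < 0 :=
          mul_neg_of_neg_of_pos (by linarith) hR0
        have h2 : 0 ≤ Z * R₁ := mul_nonneg hZ0 hR₁0.le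
        linarith
      · -- lam * p * n₁ ≥ 4 s
        have h4t : 4 * t ≤ lam * n * p := by
          nlinarith [mul_le_mul_of_nonneg_right hc hn0.le]
        have hZlbnn : (0:ℝ) ≤ lam * n * p - μ * t := by nlinarith
        have hZR₁ : (lam * n * p - μ * t) * (n₁ * p - s) < Z * R₁ := by
          nlinarith [mul_pos (show (0:ℝ) < Z - (lam * n * p - μ * t) by nlinarith [hZ.1]) hR₁0,
            mul_nonneg hZlbnn (show (0:ℝ) ≤ R₁ - (n₁ * p - s) by nlinarith [hR₁.1])]
        have hkey : (lam * p * n₁ - 4 * s) * (n * p + t) ≤ (lam * n * p - μ * t) * (n₁ * p - s) := by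
          nlinarith [mul_le_mul_of_nonneg_left hF2 (mul_nonneg hlam0.le hp0.le),
            mul_le_mul_of_nonneg_left hF2 (mul_nonneg hμ0.le hp0.le),
            mul_pos (mul_pos hs0 hn0) hp0, mul_pos hs0 ht0, mul_pos (mul_pos hμ0 ht0) hs0,
            mul_nonneg (mul_nonneg (sub_nonneg.mpr hlam1) hs0.le) (mul_nonneg hn0.le hp0.le),
            mul_nonneg (mul_nonneg (sub_nonneg.mpr hμ1) hs0.le) (mul_nonneg hn0.le hp0.le)]
        have hRub : (lam * p * n₁ - 4 * s) * R ≤ (lam * p * n₁ - 4 * s) * (n * p + t) :=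
          mul_le_mul_of_nonneg_left (by linarith [hR.2]) (by linarith)
        linarith
    have := (lt_div_iff₀ hR0).mpr hlow
    linarith
  · -- upper bound
    have hup : Z * R₁ < (lam * p * n₁ + 4 * s) * R := by
      rcases le_or_gt (n₁ * p - 3 * s) (lam * n₁ * p) with hc | hc
      · have h1 : Z * R₁ ≤ R * R₁ := mul_le_mul_of_nonneg_right hZR hR₁0.le
        have h2 : R * R₁ < R * (n₁ * p + s) := mul_lt_mul_of_pos_left (by linarith [hR₁.2]) hR0
        nlinarith [mul_pos hR0 hs0]
      · -- lam close to 0 side: lam * n₁ * p < n₁ * p - 3 s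
        have hZub : Z * R₁ < (lam * n * p + μ * t) * (n₁ * p + s) := by
          have hb : 0 < n₁ * p + s := by positivity
          have h1 : Z * R₁ ≤ Z * (n₁ * p + s) :=
            mul_le_mul_of_nonneg_left (by linarith [hR₁.2]) hZ0
          have h2 : Z * (n₁ * p + s) < (lam * n * p + μ * t) * (n₁ * p + s) :=
            mul_lt_mul_of_pos_right (by linarith [hZ.2]) hb
          linarith
        have hkey2 : (lam * n * p + μ * t) * (n₁ * p + s) ≤ (lam * p * n₁ + 4 * s) * (n * p - t) := by
          have hmul : (lam * n * p + μ * t) * (n₁ * p + s) * n₁ ≤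
              (lam * p * n₁ + 4 * s) * (n * p - t) * n₁ := by
            nlinarith [mul_le_mul_of_nonneg_left hF2 (by positivity : (0:ℝ) ≤ lam * p * n₁),
              mul_le_mul_of_nonneg_left hF2 (by positivity : (0:ℝ) ≤ μ * p * n₁),
              mul_le_mul_of_nonneg_left hF2 (by positivity : (0:ℝ) ≤ μ * s),
              mul_le_mul_of_nonneg_left hF2 (by positivity : (0:ℝ) ≤ 4 * s),
              mul_le_mul_of_nonneg_right hc.le (by positivity : (0:ℝ) ≤ s * n),
              mul_le_mul_of_nonneg_right hμ1 (by positivity : (0:ℝ) ≤ n₁ * p * (s * n)),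
              mul_pos (mul_pos hs0 hn0) (mul_pos hn₁0 hp0), mul_pos (mul_pos hs0 hs0) hn0]
          exact le_of_mul_le_mul_right hmul hn₁0
        have hRlb : (lam * p * n₁ + 4 * s) * (n * p - t) ≤ (lam * p * n₁ + 4 * s) * R :=
          mul_le_mul_of_nonneg_left (by linarith [hR.1]) (by positivity)
        linarith
    have := (div_lt_iff₀ hR0).mpr hup
    linarith
end

section
/- Let p ∈ (0,1), λ ∈ (0,1], and let n, n₁, n₂, η₁, η₂ be nonnegative real numbers satisfying η₁ ≤ n₁, η₂ ≤ n₂, n₁ − η₁ ≤ (1−λ)·n, and (n₁+n₂) − (η₁+η₂) ≤ (1−λ)·n. Define õ₁ = (1−p)·η₁ + p·λ·n₁ and õ₂ = (1−p)·η₂ + p·λ·n₂. Then n₁ ≤ min{ õ₁/(λp), (õ₁ + (1−λ)(1−p)·n)/(1−p+λp) } and n₁+n₂ ≤ min{ (õ₁+õ₂)/(λp), (õ₁+õ₂ + (1−λ)(1−p)·n)/(1−p+λp) }. -/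
/-- Upper bounds on the total numbers of customers derived from the deterministic
approximations `õ₁` and `õ₂` (Lemma prop:Ubounds of the paper). -/
theorem upper_bounds_from_deterministic_approx
    (p lam n n₁ n₂ η₁ η₂ : ℝ)
    (hp : p ∈ Set.Ioo (0 : ℝ) 1) (hlam : lam ∈ Set.Ioc (0 : ℝ) 1)
    (hn : 0 ≤ n) (hn₁ : 0 ≤ n₁) (hn₂ : 0 ≤ n₂) (hη₁ : 0 ≤ η₁) (hη₂ : 0 ≤ η₂)
    (h1 : η₁ ≤ n₁) (h2 : η₂ ≤ n₂)
    (h3 : n₁ - η₁ ≤ (1 - lam) * n)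
    (h4 : (n₁ + n₂) - (η₁ + η₂) ≤ (1 - lam) * n) :
    n₁ ≤ min (((1 - p) * η₁ + p * lam * n₁) / (lam * p))
             ((((1 - p) * η₁ + p * lam * n₁) + (1 - lam) * (1 - p) * n) / (1 - p + lam * p)) ∧
    n₁ + n₂ ≤ min ((((1 - p) * η₁ + p * lam * n₁) + ((1 - p) * η₂ + p * lam * n₂)) / (lam * p))
             (((((1 - p) * η₁ + p * lam * n₁) + ((1 - p) * η₂ + p * lam * n₂))
                + (1 - lam) * (1 - p) * n) / (1 - p + lam * p)) := by
  obtain ⟨hp0, hp1⟩ := hp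
  obtain ⟨hl0, hl1⟩ := hlam
  have hlp : 0 < lam * p := mul_pos hl0 hp0
  have hd : 0 < 1 - p + lam * p := by nlinarith
  constructor
  · refine le_min (by rw [le_div_iff₀ hlp]; nlinarith) ?_
    rw [le_div_iff₀ hd]; nlinarith
  · refine le_min (by rw [le_div_iff₀ hlp]; nlinarith) ?_
    rw [le_div_iff₀ hd]; nlinarith
end

section
/- Let p ∈ (0,1) and let δ, λ be reals with 0 < δ ≤ λ ≤ 1. Let n, N, η, Δ be nonnegative reals with η ≤ N and N − η ≤ (1−λ)·n, and let x be a real number with x ≥ (1−p)·η + p·λ·N − 2Δ. Then min{ x/(λp), (x + (1−λ)(1−p)·n)/(1−p+λp) } ≥ N − 2Δ/(δp). -/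
/-- Deterministic core of Lemma prop:full-Ubounds: the adaptive algorithm's upper-bound
function evaluated at time `λ ≥ δ` from an observed count `x` is at least
`N − 2Δ/(δp)`, where `N` is the true total. -/
theorem adaptive_upper_bound_estimate
    (p δ lam n N η Δ x : ℝ)
    (hp : p ∈ Set.Ioo (0 : ℝ) 1)
    (hδ : 0 < δ) (hδlam : δ ≤ lam) (hlam : lam ≤ 1)
    (hn : 0 ≤ n) (hN : 0 ≤ N) (hη : 0 ≤ η) (hΔ : 0 ≤ Δ)
    (hηN : η ≤ N) (hNη : N - η ≤ (1 - lam) * n)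
    (hx : (1 - p) * η + p * lam * N - 2 * Δ ≤ x) :
    N - 2 * Δ / (δ * p) ≤
      min (x / (lam * p)) ((x + (1 - lam) * (1 - p) * n) / (1 - p + lam * p)) := by
  obtain ⟨hp0, hp1⟩ := hp
  have hlam0 : 0 < lam := hδ.trans_le hδlam
  have hlp : 0 < lam * p := mul_pos hlam0 hp0
  have hδp : 0 < δ * p := mul_pos hδ hp0
  have hden : 0 < 1 - p + lam * p := by nlinarith
  set t := 2 * Δ / (δ * p) with ht
  have ht0 : 0 ≤ t := by positivity
  have htδ : t * (δ * p) = 2 * Δ := div_mul_cancel₀ _ hδp.ne'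
  have hδlp : δ * p ≤ lam * p := by nlinarith
  have h1 : 2 * Δ ≤ t * (lam * p) := by
    calc 2 * Δ = t * (δ * p) := htδ.symm
    _ ≤ t * (lam * p) := mul_le_mul_of_nonneg_left hδlp ht0
  have hδden : δ * p ≤ 1 - p + lam * p := by nlinarith
  have h2 : 2 * Δ ≤ t * (1 - p + lam * p) := by
    calc 2 * Δ = t * (δ * p) := htδ.symm
    _ ≤ t * (1 - p + lam * p) := mul_le_mul_of_nonneg_left hδden ht0
  refine le_min ?_ ?_
  · rw [le_div_iff₀ hlp]
    nlinarith [mul_nonneg (sub_nonneg.2 hp1.le) hη]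
  · rw [le_div_iff₀ hden]
    nlinarith [mul_le_mul_of_nonneg_left hNη (sub_nonneg.2 hp1.le)]
end

section
/- Let a, p ∈ (0,1), let n and b be positive reals with b ≤ n, let λ ∈ (0,1], and let n₁, n₂, η₁, η₂, c be nonnegative reals. Define õ₁ = (1−p)η₁ + p·n₁·λ, õ₂ = (1−p)η₂ + p·n₂·λ, ũ₁ = min{ õ₁/(λp), (õ₁ + (1−λ)(1−p)·n)/(1−p+λp) }, and ũ₁₂ = min{ (õ₁+õ₂)/(λp), (õ₁+õ₂+(1−λ)(1−p)·n)/(1−p+λp) }. Suppose all of the following constraints hold: (i) c ≥ ( a·(n₂ − õ₂ + b/(1−a)) + n₁ ) / ( a·min{n₁+n₂, b} + (1−a)·n₁ + a²·b/(1−a) + a·min{ũ₁, b} ); (ii) ũ₁₂ ≥ b; (iii) η₁ + η₂ ≤ λ·n; (iv) η₁ ≤ n₁; (v) η₂ ≤ n₂; (vi) n₁ ≤ b; (vii) n₁ + n₂ ≤ n; (viii) n₁ + n₂ ≤ η₁ + η₂ + (1−λ)·n. Then c ≥ p + (1−p)/(2−a). -/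
set_option maxHeartbeats 1600000 in
/-- Key polynomial inequality: the factor-revealing program's objective bound,
with the `min` terms abstracted as `X` and `Y`. -/
lemma MP1_key_ineq (a p lam n₁ n₂ η₁ η₂ b X Y : ℝ)
    (ha0 : 0 < a) (ha1 : a < 1) (hp0 : 0 < p) (hp1 : p < 1)
    (hl0 : 0 < lam) (hl1 : lam ≤ 1)
    (hη₁ : 0 ≤ η₁) (h1 : η₁ ≤ n₁) (h2 : η₂ ≤ n₂) (hn1 : 0 ≤ n₁) (hb : 0 < b)
    (hX1 : X ≤ n₁ + n₂) (hXb : X ≤ b) (hY0 : 0 ≤ Y) (hYb : Y ≤ b)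
    (hY1 : lam * p * Y ≤ (1 - p) * η₁ + p * n₁ * lam) :
    (1 + p - p * a) * ((1 - a) * (a * X + (1 - a) * n₁ + a * Y) + a ^ 2 * b)
      ≤ (2 - a) * ((1 - a) * (a * (n₂ - ((1 - p) * η₂ + p * n₂ * lam)) + n₁) + a * b) := by
  have h1a : (0:ℝ) ≤ 1 - a := by linarith
  have h2a : (0:ℝ) < 2 - a := by linarith
  have h1p : (0:ℝ) ≤ 1 - p := by linarith
  have h1l : (0:ℝ) ≤ 1 - lam := by linarith
  have hq : (0:ℝ) < 1 - p + lam * p := by nlinarith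
  have h1ppa : (0:ℝ) ≤ 1 + p - p * a := by nlinarith
  have hW : (0:ℝ) ≤ 1 - p + p * a * (2 - a) * lam := by
    nlinarith [mul_nonneg (mul_nonneg (mul_nonneg hp0.le ha0.le) h2a.le) hl0.le]
  have hs1 : (0:ℝ) ≤ n₂ - η₂ := by linarith
  have hs2 : (0:ℝ) ≤ n₁ - η₁ := by linarith
  have hs3 : (0:ℝ) ≤ n₁ + n₂ - X := by linarith
  have hs4 : (0:ℝ) ≤ b - X := by linarith
  have hs5 : (0:ℝ) ≤ b - Y := by linarith
  have hs6 : (0:ℝ) ≤ (1 - p) * η₁ + p * n₁ * lam - lam * p * Y := by linarith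
  have hxb : (0:ℝ) ≤ a * (1 + p - p * a) - a * (2 - a) * p * (1 - lam) := by
    nlinarith [mul_nonneg (mul_nonneg (mul_nonneg ha0.le hp0.le) h2a.le) hl0.le,
      mul_nonneg ha0.le h1p]
  have hc7 : (0:ℝ) ≤ 1 + p - p * a - lam * p * (2 - a) := by
    nlinarith [mul_nonneg (mul_nonneg hp0.le h1l) h1a, mul_nonneg hp0.le h1l]
  set q : ℝ := 1 - p + lam * p with hqdef
  set W : ℝ := 1 - p + p * a * (2 - a) * lam with hWdef
  rcases le_or_gt (lam * p * W) (a * (1 + p - p * a) * q) with hcase | hcase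
  · -- case A : ν_yb ≥ 0
    have t1 : (0:ℝ) ≤ (1 - a) * W * ((1 - p) * η₁ + p * n₁ * lam - lam * p * Y) :=
      mul_nonneg (mul_nonneg h1a hW) hs6
    have t2 : (0:ℝ) ≤ (1 - a) * ((1 - p) * W) * (n₁ - η₁) :=
      mul_nonneg (mul_nonneg h1a (mul_nonneg h1p hW)) hs2
    have t3 : (0:ℝ) ≤ (1 - a) * (a * (2 - a) * (1 - p) * q) * (n₂ - η₂) :=
      mul_nonneg (mul_nonneg h1a
        (mul_nonneg (mul_nonneg (mul_nonneg ha0.le h2a.le) h1p) hq.le)) hs1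
    have t4 : (0:ℝ) ≤ (1 - a) * (a * (2 - a) * p * (1 - lam) * q) * (n₁ + n₂ - X) :=
      mul_nonneg (mul_nonneg h1a (mul_nonneg
        (mul_nonneg (mul_nonneg (mul_nonneg ha0.le h2a.le) hp0.le) h1l) hq.le)) hs3
    have t5 : (0:ℝ) ≤ (1 - a) * ((a * (1 + p - p * a) - a * (2 - a) * p * (1 - lam)) * q) * (b - X) :=
      mul_nonneg (mul_nonneg h1a (mul_nonneg hxb hq.le)) hs4
    have t6 : (0:ℝ) ≤ (1 - a) * (a * (1 + p - p * a) * q - lam * p * W) * (b - Y) :=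
      mul_nonneg (mul_nonneg h1a (by linarith)) hs5
    have t7 : (0:ℝ) ≤ (1 - a) * (lam * p * (1 - p) * (1 - a) ^ 2) * b :=
      mul_nonneg (mul_nonneg h1a (mul_nonneg
        (mul_nonneg (mul_nonneg hl0.le hp0.le) h1p) (sq_nonneg _))) hb.le
    have hqP : (0:ℝ) ≤ q *
        ((2 - a) * ((1 - a) * (a * (n₂ - ((1 - p) * η₂ + p * n₂ * lam)) + n₁) + a * b)
          - (1 + p - p * a) * ((1 - a) * (a * X + (1 - a) * n₁ + a * Y) + a ^ 2 * b)) := by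
      have hid : q *
          ((2 - a) * ((1 - a) * (a * (n₂ - ((1 - p) * η₂ + p * n₂ * lam)) + n₁) + a * b)
            - (1 + p - p * a) * ((1 - a) * (a * X + (1 - a) * n₁ + a * Y) + a ^ 2 * b))
          = (1 - a) * W * ((1 - p) * η₁ + p * n₁ * lam - lam * p * Y)
            + (1 - a) * ((1 - p) * W) * (n₁ - η₁)
            + (1 - a) * (a * (2 - a) * (1 - p) * q) * (n₂ - η₂)
            + (1 - a) * (a * (2 - a) * p * (1 - lam) * q) * (n₁ + n₂ - X)
            + (1 - a) * ((a * (1 + p - p * a) - a * (2 - a) * p * (1 - lam)) * q) * (b - X)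
            + (1 - a) * (a * (1 + p - p * a) * q - lam * p * W) * (b - Y)
            + (1 - a) * (lam * p * (1 - p) * (1 - a) ^ 2) * b := by
        rw [hqdef, hWdef]; ring
      rw [hid]; linarith
    nlinarith [hqP, hq]
  · -- case B : ν_yb < 0
    have hlp : (0:ℝ) < lam * p := mul_pos hl0 hp0
    have u1 : (0:ℝ) ≤ (1 - a) * (a * (1 + p - p * a) * q) *
        ((1 - p) * η₁ + p * n₁ * lam - lam * p * Y) :=
      mul_nonneg (mul_nonneg h1a (mul_nonneg (mul_nonneg ha0.le h1ppa) hq.le)) hs6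
    have u2 : (0:ℝ) ≤ (1 - a) * ((1 - p) * (a * (1 + p - p * a) * q)) * (n₁ - η₁) :=
      mul_nonneg (mul_nonneg h1a (mul_nonneg h1p
        (mul_nonneg (mul_nonneg ha0.le h1ppa) hq.le))) hs2
    have u3 : (0:ℝ) ≤ (1 - a) * (lam * p * (a * (2 - a) * (1 - p) * q)) * (n₂ - η₂) :=
      mul_nonneg (mul_nonneg h1a (mul_nonneg hlp.le
        (mul_nonneg (mul_nonneg (mul_nonneg ha0.le h2a.le) h1p) hq.le))) hs1
    have u4 : (0:ℝ) ≤ (1 - a) * (lam * p * (a * (2 - a) * p * (1 - lam) * q)) * (n₁ + n₂ - X) :=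
      mul_nonneg (mul_nonneg h1a (mul_nonneg hlp.le (mul_nonneg
        (mul_nonneg (mul_nonneg (mul_nonneg ha0.le h2a.le) hp0.le) h1l) hq.le))) hs3
    have u5 : (0:ℝ) ≤ (1 - a) * (lam * p *
        ((a * (1 + p - p * a) - a * (2 - a) * p * (1 - lam)) * q)) * (b - X) :=
      mul_nonneg (mul_nonneg h1a (mul_nonneg hlp.le (mul_nonneg hxb hq.le))) hs4
    have u6 : (0:ℝ) ≤ (1 - a) * ((lam * p * W - a * (1 + p - p * a) * q) * q) * n₁ :=
      mul_nonneg (mul_nonneg h1a (mul_nonneg (by linarith) hq.le)) hn1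
    have u7 : (0:ℝ) ≤ (1 - a) * (lam * p * a * q * (1 + p - p * a - lam * p * (2 - a))) * b :=
      mul_nonneg (mul_nonneg h1a (mul_nonneg
        (mul_nonneg (mul_nonneg hlp.le ha0.le) hq.le) hc7)) hb.le
    have hqP : (0:ℝ) ≤ (lam * p * q) *
        ((2 - a) * ((1 - a) * (a * (n₂ - ((1 - p) * η₂ + p * n₂ * lam)) + n₁) + a * b)
          - (1 + p - p * a) * ((1 - a) * (a * X + (1 - a) * n₁ + a * Y) + a ^ 2 * b)) := by
      have hid : (lam * p * q) *
          ((2 - a) * ((1 - a) * (a * (n₂ - ((1 - p) * η₂ + p * n₂ * lam)) + n₁) + a * b)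
            - (1 + p - p * a) * ((1 - a) * (a * X + (1 - a) * n₁ + a * Y) + a ^ 2 * b))
          = (1 - a) * (a * (1 + p - p * a) * q) *
              ((1 - p) * η₁ + p * n₁ * lam - lam * p * Y)
            + (1 - a) * ((1 - p) * (a * (1 + p - p * a) * q)) * (n₁ - η₁)
            + (1 - a) * (lam * p * (a * (2 - a) * (1 - p) * q)) * (n₂ - η₂)
            + (1 - a) * (lam * p * (a * (2 - a) * p * (1 - lam) * q)) * (n₁ + n₂ - X)
            + (1 - a) * (lam * p *
                ((a * (1 + p - p * a) - a * (2 - a) * p * (1 - lam)) * q)) * (b - X)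
            + (1 - a) * ((lam * p * W - a * (1 + p - p * a) * q) * q) * n₁
            + (1 - a) * (lam * p * a * q * (1 + p - p * a - lam * p * (2 - a))) * b := by
        rw [hqdef, hWdef]; ring
      rw [hid]; linarith
    nlinarith [hqP, mul_pos hlp hq]

/-- First part of the paper's Proposition on the values of the factor-revealing
program (MP1): for any `b ≤ n`, every feasible `c` satisfies `c ≥ p + (1−p)/(2−a)`. -/
theorem MP1_lower_bound_general
    (a p n b lam n₁ n₂ η₁ η₂ c o₁ o₂ u₁ u₁₂ : ℝ)
    (ha : a ∈ Set.Ioo (0 : ℝ) 1) (hp : p ∈ Set.Ioo (0 : ℝ) 1)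
    (hn : 0 < n) (hb : 0 < b) (hbn : b ≤ n)
    (hlam : lam ∈ Set.Ioc (0 : ℝ) 1)
    (hn₁ : 0 ≤ n₁) (hn₂ : 0 ≤ n₂) (hη₁ : 0 ≤ η₁) (hη₂ : 0 ≤ η₂) (hc : 0 ≤ c)
    (ho₁ : o₁ = (1 - p) * η₁ + p * n₁ * lam)
    (ho₂ : o₂ = (1 - p) * η₂ + p * n₂ * lam)
    (hu₁ : u₁ = min (o₁ / (lam * p)) ((o₁ + (1 - lam) * (1 - p) * n) / (1 - p + lam * p)))
    (hu₁₂ : u₁₂ = min ((o₁ + o₂) / (lam * p))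
        ((o₁ + o₂ + (1 - lam) * (1 - p) * n) / (1 - p + lam * p)))
    (hc1 : c ≥ (a * (n₂ - o₂ + b / (1 - a)) + n₁) /
        (a * min (n₁ + n₂) b + (1 - a) * n₁ + a ^ 2 * b / (1 - a) + a * min u₁ b))
    (hc2 : u₁₂ ≥ b)
    (hc3 : η₁ + η₂ ≤ lam * n)
    (hc4 : η₁ ≤ n₁) (hc5 : η₂ ≤ n₂) (hc6 : n₁ ≤ b)
    (hc7 : n₁ + n₂ ≤ n) (hc8 : n₁ + n₂ ≤ η₁ + η₂ + (1 - lam) * n) :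
    c ≥ p + (1 - p) / (2 - a) := by
  obtain ⟨ha0, ha1⟩ := ha
  obtain ⟨hp0, hp1⟩ := hp
  obtain ⟨hl0, hl1⟩ := hlam
  have h1a : (0:ℝ) < 1 - a := by linarith
  have h2a : (0:ℝ) < 2 - a := by linarith
  have hlp : (0:ℝ) < lam * p := mul_pos hl0 hp0
  have hq : (0:ℝ) < 1 - p + lam * p := by nlinarith
  have ho₁pos : 0 ≤ o₁ := by
    rw [ho₁]
    have h1 := mul_nonneg (by linarith : (0:ℝ) ≤ 1 - p) hη₁
    have h2 := mul_nonneg (mul_nonneg hp0.le hn₁) hl0.le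
    linarith
  have hu₁pos : 0 ≤ u₁ := by
    rw [hu₁]
    have hrest : (0:ℝ) ≤ (1 - lam) * (1 - p) * n :=
      mul_nonneg (mul_nonneg (by linarith) (by linarith)) hn.le
    exact le_min (div_nonneg ho₁pos hlp.le) (div_nonneg (by linarith) hq.le)
  -- Y := min u₁ b facts
  set Y : ℝ := min u₁ b with hYdef
  have hY0 : 0 ≤ Y := le_min hu₁pos hb.le
  have hYb : Y ≤ b := min_le_right _ _
  have hY1 : lam * p * Y ≤ (1 - p) * η₁ + p * n₁ * lam := by
    have h : Y ≤ o₁ / (lam * p) := le_trans (min_le_left _ _) (by rw [hu₁]; exact min_le_left _ _)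
    have := (le_div_iff₀ hlp).mp h
    rw [ho₁] at this; linarith
  set X : ℝ := min (n₁ + n₂) b with hXdef
  have hX1 : X ≤ n₁ + n₂ := min_le_left _ _
  have hXb : X ≤ b := min_le_right _ _
  -- key inequality
  have key := MP1_key_ineq a p lam n₁ n₂ η₁ η₂ b X Y ha0 ha1 hp0 hp1 hl0 hl1
    hη₁ hc4 hc5 hn₁ hb hX1 hXb hY0 hYb hY1
  -- denominator positivity
  have hX0 : 0 ≤ X := le_min (by linarith) hb.le
  have hD : 0 < a * X + (1 - a) * n₁ + a ^ 2 * b / (1 - a) + a * Y := by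
    have h3 : 0 < a ^ 2 * b / (1 - a) := by positivity
    have h4 : 0 ≤ a * X := mul_nonneg ha0.le hX0
    have h5 : 0 ≤ a * Y := mul_nonneg ha0.le hY0
    nlinarith
  -- target value rewrite
  have hgoal : p + (1 - p) / (2 - a) = (1 + p - p * a) / (2 - a) := by
    field_simp; ring
  rw [ge_iff_le, hgoal]
  have hND : (1 + p - p * a) / (2 - a) ≤
      (a * (n₂ - o₂ + b / (1 - a)) + n₁) /
        (a * X + (1 - a) * n₁ + a ^ 2 * b / (1 - a) + a * Y) := by
    rw [div_le_div_iff₀ h2a hD]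
    have e1 : (1 - a) * (a * (n₂ - o₂ + b / (1 - a)) + n₁)
        = (1 - a) * (a * (n₂ - ((1 - p) * η₂ + p * n₂ * lam)) + n₁) + a * b := by
      rw [ho₂]; field_simp; ring
    have e2 : (1 - a) * (a * X + (1 - a) * n₁ + a ^ 2 * b / (1 - a) + a * Y)
        = (1 - a) * (a * X + (1 - a) * n₁ + a * Y) + a ^ 2 * b := by
      field_simp; ring
    have hmul : (1 - a) * ((1 + p - p * a) *
        (a * X + (1 - a) * n₁ + a ^ 2 * b / (1 - a) + a * Y))
        ≤ (1 - a) * ((a * (n₂ - o₂ + b / (1 - a)) + n₁) * (2 - a)) := by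
      calc (1 - a) * ((1 + p - p * a) *
            (a * X + (1 - a) * n₁ + a ^ 2 * b / (1 - a) + a * Y))
          = (1 + p - p * a) * ((1 - a) * (a * X + (1 - a) * n₁ + a * Y) + a ^ 2 * b) := by
            rw [← e2]; ring
        _ ≤ (2 - a) * ((1 - a) * (a * (n₂ - ((1 - p) * η₂ + p * n₂ * lam)) + n₁) + a * b) := key
        _ = (1 - a) * ((a * (n₂ - o₂ + b / (1 - a)) + n₁) * (2 - a)) := by
            rw [← e1]; ring
    exact le_of_mul_le_mul_left hmul h1a
  exact le_trans hND hc1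
end

section
/- Let a, p ∈ (0,1), let n be a positive real and set b = n, let λ ∈ (0,1], and let n₁, n₂, η₁, η₂, c be nonnegative reals. Define õ₁ = (1−p)η₁ + p·n₁·λ, õ₂ = (1−p)η₂ + p·n₂·λ, ũ₁ = min{ õ₁/(λp), (õ₁ + (1−λ)(1−p)·n)/(1−p+λp) }, and ũ₁₂ = min{ (õ₁+õ₂)/(λp), (õ₁+õ₂+(1−λ)(1−p)·n)/(1−p+λp) }. Suppose all of the following constraints hold: (i) c ≥ ( a·(n₂ − õ₂ + b/(1−a)) + n₁ ) / ( a·min{n₁+n₂, b} + (1−a)·n₁ + a²·b/(1−a) + a·min{ũ₁, b} ); (ii) ũ₁₂ ≥ b; (iii) η₁ + η₂ ≤ λ·n; (iv) η₁ ≤ n₁; (v) η₂ ≤ n₂; (vi) n₁ ≤ b; (vii) n₁ + n₂ ≤ n; (viii) n₁ + n₂ ≤ η₁ + η₂ + (1−λ)·n. Then c ≥ 1. -/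
set_option maxHeartbeats 800000 in
/-- Second part of the paper's Proposition on the values of the factor-revealing
program (MP1): when `b = n`, every feasible `c` satisfies `c ≥ 1`. -/
theorem MP1_lower_bound_full_inventory
    (a p n b lam n₁ n₂ η₁ η₂ c o₁ o₂ u₁ u₁₂ : ℝ)
    (ha : a ∈ Set.Ioo (0 : ℝ) 1) (hp : p ∈ Set.Ioo (0 : ℝ) 1)
    (hn : 0 < n) (hb : b = n)
    (hlam : lam ∈ Set.Ioc (0 : ℝ) 1)
    (hn₁ : 0 ≤ n₁) (hn₂ : 0 ≤ n₂) (hη₁ : 0 ≤ η₁) (hη₂ : 0 ≤ η₂) (hc : 0 ≤ c)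
    (ho₁ : o₁ = (1 - p) * η₁ + p * n₁ * lam)
    (ho₂ : o₂ = (1 - p) * η₂ + p * n₂ * lam)
    (hu₁ : u₁ = min (o₁ / (lam * p)) ((o₁ + (1 - lam) * (1 - p) * n) / (1 - p + lam * p)))
    (hu₁₂ : u₁₂ = min ((o₁ + o₂) / (lam * p))
        ((o₁ + o₂ + (1 - lam) * (1 - p) * n) / (1 - p + lam * p)))
    (hc1 : c ≥ (a * (n₂ - o₂ + b / (1 - a)) + n₁) /
        (a * min (n₁ + n₂) b + (1 - a) * n₁ + a ^ 2 * b / (1 - a) + a * min u₁ b))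
    (hc2 : u₁₂ ≥ b)
    (hc3 : η₁ + η₂ ≤ lam * n)
    (hc4 : η₁ ≤ n₁) (hc5 : η₂ ≤ n₂) (hc6 : n₁ ≤ b)
    (hc7 : n₁ + n₂ ≤ n) (hc8 : n₁ + n₂ ≤ η₁ + η₂ + (1 - lam) * n) :
    c ≥ 1 := by
  obtain ⟨ha0, ha1⟩ := ha
  obtain ⟨hp0, hp1⟩ := hp
  obtain ⟨hl0, hl1⟩ := hlam
  rw [hb] at hc1 hc2 hc6
  have h1a : (0:ℝ) < 1 - a := by linarith
  have h1p : (0:ℝ) < 1 - p := by linarith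
  have hlp : (0:ℝ) < lam * p := mul_pos hl0 hp0
  have hs : (0:ℝ) < 1 - p + lam * p := by linarith
  have ho₁0 : 0 ≤ o₁ := by rw [ho₁]; positivity
  have ho₂0 : 0 ≤ o₂ := by rw [ho₂]; positivity
  have hln : 0 ≤ (1 - lam) * (1 - p) * n := by
    have h : (0:ℝ) ≤ 1 - lam := by linarith
    positivity
  have hu₁0 : 0 ≤ u₁ := by
    rw [hu₁]
    exact le_min (by positivity) (div_nonneg (by linarith) hs.le)
  -- key bound : u₁ + o₂ ≤ n
  have hkey : u₁ + o₂ ≤ n := by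
    have h1 : u₁ ≤ (o₁ + (1 - lam) * (1 - p) * n) / (1 - p + lam * p) := by
      rw [hu₁]; exact min_le_right _ _
    have h2 : u₁ * (1 - p + lam * p) ≤ o₁ + (1 - lam) * (1 - p) * n :=
      (le_div_iff₀ hs).mp h1
    have h3 : (1 - p + lam * p) * o₂ ≤ o₂ := by
      nlinarith [mul_nonneg ho₂0 (mul_nonneg hp0.le (by linarith : (0:ℝ) ≤ 1 - lam))]
    have h4 : o₁ + o₂ ≤ lam * n := by
      rw [ho₁, ho₂]
      nlinarith
    nlinarith
  have hm1 : min (n₁ + n₂) n ≤ n₁ + n₂ := min_le_left _ _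
  have hm2 : min u₁ n ≤ u₁ := min_le_left _ _
  have hmin1 : 0 ≤ min (n₁ + n₂) n := le_min (by linarith) hn.le
  have hmin2 : 0 ≤ min u₁ n := le_min hu₁0 hn.le
  have hDpos : 0 < a * min (n₁ + n₂) n + (1 - a) * n₁ + a ^ 2 * n / (1 - a) + a * min u₁ n := by
    have h0 : 0 < a ^ 2 * n / (1 - a) := by positivity
    have h1 : 0 ≤ a * min (n₁ + n₂) n := mul_nonneg ha0.le hmin1
    have h2 : 0 ≤ (1 - a) * n₁ := mul_nonneg h1a.le hn₁
    have h3 : 0 ≤ a * min u₁ n := mul_nonneg ha0.le hmin2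
    linarith
  have hsplit : a * (n / (1 - a)) = a ^ 2 * n / (1 - a) + a * n := by
    rw [div_add' _ _ _ h1a.ne', mul_div_assoc']
    congr 1
    ring
  have hA : a * min (n₁ + n₂) n ≤ a * (n₁ + n₂) := mul_le_mul_of_nonneg_left hm1 ha0.le
  have hB : a * min u₁ n ≤ a * (n - o₂) :=
    mul_le_mul_of_nonneg_left (le_trans hm2 (by linarith)) ha0.le
  have hND : a * min (n₁ + n₂) n + (1 - a) * n₁ + a ^ 2 * n / (1 - a) + a * min u₁ n
      ≤ a * (n₂ - o₂ + n / (1 - a)) + n₁ := by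
    have hexp : a * (n₂ - o₂ + n / (1 - a)) = a * n₂ - a * o₂ + a * (n / (1 - a)) := by ring
    rw [hexp, hsplit]
    have hA' : a * (n₁ + n₂) = a * n₁ + a * n₂ := by ring
    have hB' : a * (n - o₂) = a * n - a * o₂ := by ring
    rw [hA'] at hA
    rw [hB'] at hB
    linarith
  have h1le : (1:ℝ) ≤ (a * (n₂ - o₂ + n / (1 - a)) + n₁) /
      (a * min (n₁ + n₂) n + (1 - a) * n₁ + a ^ 2 * n / (1 - a) + a * min u₁ n) :=
    (one_le_div hDpos).mpr hND
  linarith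
end

section
/- Let p ∈ (0,1]. Then there exists a unique γ* ∈ (0,1) satisfying log(γ*·p + 1 − p) + (γ*·p)/(γ*·p + 1 − p) = 0, and this γ* maximizes the function γ ↦ γ·p·log(1/(γ·p + 1 − p)) over (0,1); that is, for every γ ∈ (0,1), γ·p·log(1/(γ·p+1−p)) ≤ γ*·p·log(1/(γ*·p+1−p)). -/
/-!
Substituting `x = γp + 1 − p` and `q = 1 − p` turns the success probability into
`φ(x) = (x − q) · log (1 / x)` on `(q, 1)`, whose derivative is `−(log x + (x − q) / x)`.
That expression is strictly increasing in `x`, negative near `q` and equal to `p > 0` at `x = 1`,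
so it has exactly one root `x*` in `(q, 1)`. Since `φ` is concave, `x*` maximizes it.
-/

open Real Set

lemma strictMonoOn_log_add_sub_div {q : ℝ} (hq : 0 ≤ q) :
    StrictMonoOn (fun x => log x + (x - q) / x) (Ioi 0) := by
  intro a (ha : 0 < a) b (hb : 0 < b) hab
  have hlog : log a < log b := log_lt_log ha hab
  have hdiv : q / b ≤ q / a := div_le_div_of_nonneg_left hq ha hab.le
  simp only [sub_div, div_self ha.ne', div_self hb.ne']
  linarith

lemma exists_log_add_sub_div_eq_zero {q : ℝ} (hq0 : 0 ≤ q) (hq1 : q < 1) :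
    ∃ x ∈ Ioo q 1, log x + (x - q) / x = 0 := by
  obtain ⟨a, hqa, ha, ha1, hfa⟩ : ∃ a, q ≤ a ∧ 0 < a ∧ a < 1 ∧ log a + (a - q) / a < 0 := by
    rcases hq0.eq_or_lt with rfl | hq
    · refine ⟨exp (-2), (exp_pos _).le, exp_pos _, exp_lt_one_iff.2 (by norm_num), ?_⟩
      rw [log_exp, sub_zero, div_self (exp_pos _).ne']
      norm_num
    · refine ⟨q, le_rfl, hq, hq1, ?_⟩
      rw [sub_self, zero_div, add_zero]
      exact log_neg hq hq1
  have hcont : ContinuousOn (fun x => log x + (x - q) / x) (Icc a 1) := by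
    have hne : ∀ x ∈ Icc a 1, x ≠ 0 := fun x hx => (ha.trans_le hx.1).ne'
    exact (continuousOn_log.mono hne).add ((continuousOn_id.sub continuousOn_const).div
      continuousOn_id hne)
  obtain ⟨x, hx, hfx⟩ :=
    intermediate_value_Ioo ha1.le hcont ⟨hfa, by rw [log_one, div_one, zero_add]; linarith⟩
  exact ⟨x, ⟨hqa.trans_lt hx.1, hx.2⟩, hfx⟩

lemma sub_mul_log_one_div_le_of_log_add_sub_div_eq_zero {q x y : ℝ} (hq : 0 ≤ q) (hx : 0 < x)
    (hy : 0 < y) (hcrit : log y + (y - q) / y = 0) :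
    (x - q) * log (1 / x) ≤ (y - q) * log (1 / y) := by
  -- tangent lines at `y` of the concave functions `-x log x` and `log x`
  have hxlog : x * (log y - log x) ≤ y - x := by
    have h := mul_le_mul_of_nonneg_left (log_le_sub_one_of_pos (div_pos hy hx)) hx.le
    rwa [log_div hy.ne' hx.ne', show x * (y / x - 1) = y - x by field_simp] at h
  have hqlog : q * (log x - log y) ≤ q * (x / y - 1) := by
    rw [← log_div hx.ne' hy.ne']
    exact mul_le_mul_of_nonneg_left (log_le_sub_one_of_pos (div_pos hx hy)) hq
  have hcrit_div : log y + (1 - q / y) = 0 := by rwa [sub_div, div_self hy.ne'] at hcrit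
  have hcrit_mul : y * log y + y - q = 0 := by field_simp at hcrit; linarith
  simp only [one_div, log_inv]
  linear_combination hxlog + hqlog + hcrit_mul - x * hcrit_div

/-- There is a unique `γ* ∈ (0,1)` solving
`log(γ*p + 1 − p) + γ*p/(γ*p + 1 − p) = 0`, and it maximizes
`γ ↦ γ·p·log(1/(γp + 1 − p))` over `(0,1)`. -/
theorem optimal_observation_length
    (p : ℝ) (hp : p ∈ Set.Ioc (0 : ℝ) 1) :
    ∃ γs : ℝ, γs ∈ Set.Ioo (0 : ℝ) 1 ∧
      Real.log (γs * p + 1 - p) + γs * p / (γs * p + 1 - p) = 0 ∧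
      (∀ γ ∈ Set.Ioo (0 : ℝ) 1,
        Real.log (γ * p + 1 - p) + γ * p / (γ * p + 1 - p) = 0 → γ = γs) ∧
      (∀ γ ∈ Set.Ioo (0 : ℝ) 1,
        γ * p * Real.log (1 / (γ * p + 1 - p))
          ≤ γs * p * Real.log (1 / (γs * p + 1 - p))) := by
  obtain ⟨hp0, hp1⟩ := hp
  have hq : 0 ≤ 1 - p := sub_nonneg.2 hp1
  obtain ⟨xs, ⟨hqxs, hxs1⟩, hcrit⟩ := exists_log_add_sub_div_eq_zero hq (sub_lt_self 1 hp0)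
  have hxs_pos : 0 < xs := hq.trans_lt hqxs
  have hx_pos : ∀ γ ∈ Ioo (0 : ℝ) 1, 0 < γ * p + 1 - p := fun γ hγ => by nlinarith [hγ.1]
  have hsub : ∀ γ : ℝ, γ * p + 1 - p - (1 - p) = γ * p := fun γ => by ring
  set γs := (xs - (1 - p)) / p
  have hγs : γs * p = xs - (1 - p) := div_mul_cancel₀ _ hp0.ne'
  have hxs : γs * p + 1 - p = xs := by rw [hγs]; ring
  refine ⟨γs, ⟨div_pos (by linarith) hp0, (div_lt_one hp0).2 (by linarith)⟩, ?_, ?_, ?_⟩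
  · rwa [hxs, hγs]
  · intro γ hγ hcritγ
    have hx : γ * p + 1 - p = xs :=
      (strictMonoOn_log_add_sub_div hq).injOn (hx_pos γ hγ) hxs_pos
        (by simp only [hsub, hcritγ, hcrit])
    exact mul_right_cancel₀ hp0.ne' (by linarith)
  · intro γ hγ
    have h := sub_mul_log_one_div_le_of_log_add_sub_div_eq_zero hq (hx_pos γ hγ) hxs_pos hcrit
    rwa [hsub, ← hγs, ← hxs] at h
end

section
/- Let n ≥ 2 and p ∈ [0,1]. Define a probability distribution on pairs (s, π), where s : Fin n → Bool and π is a permutation of Fin n, as follows: the n coordinates s(1), …, s(n) are independent with P(s(i) = true) = p for each i, and conditionally on s, the permutation π is uniformly distributed over the (nonempty, finite) set of permutations of Fin n that fix every index i with s(i) = false. Then for any two distinct indices i ≠ j, the probability of the event { s(i) = true and π(i) = j } is at most p/n. -/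
/-!
Given `s`, put `S = {k | s k}`. When `i, j ∈ S`, the injection `(σ, k) ↦ swap j k * σ` shows that
a uniform permutation of `S` sends `i` to `j` with probability at most `1 / |S|`; when `j ∉ S` it
never does. So the probability in question is at most `T j = E[1{i, j ∈ S} / |S|]`
(`pairMass p i j`). The values `T j` with `j ≠ i` agree by the symmetry `j ↔ j'`, while
`∑ j, T j = P(i ∈ S) = p` and `T i = E[1{i ∈ S} / |S|] ≥ p / n`; hence `(n - 1) T j ≤ p - p / n`.
-/

open MeasureTheory

/-- Measurable structure on permutations of `Fin n` (the discrete σ-algebra). -/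
instance instMeasurableSpacePermFin (n : ℕ) : MeasurableSpace (Equiv.Perm (Fin n)) := ⊤

open Finset Equiv

lemma measure_coe_finset_le_ofReal_sum {β : Type*} [MeasurableSpace β] {μ : Measure β}
    {f : β → ℝ} (hf : ∀ x, 0 ≤ f x) (hμ : ∀ x, μ {x} = ENNReal.ofReal (f x)) (A : Finset β) :
    μ A ≤ ENNReal.ofReal (∑ x ∈ A, f x) := by
  calc μ A = μ (⋃ x ∈ A, {x}) := by rw [← set_biUnion_coe, Set.biUnion_of_singleton]
    _ ≤ ∑ x ∈ A, μ {x} := measure_biUnion_finset_le A _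
    _ = ENNReal.ofReal (∑ x ∈ A, f x) := by
      rw [ENNReal.ofReal_sum_of_nonneg fun x _ => hf x]
      simp only [hμ]

section

variable {α : Type*} [Fintype α]

noncomputable def bernoulliWeight (p : ℝ) (s : α → Bool) : ℝ := ∏ k, if s k then p else 1 - p

lemma bernoulliWeight_nonneg {p : ℝ} (hp : p ∈ Set.Icc (0 : ℝ) 1) (s : α → Bool) :
    0 ≤ bernoulliWeight p s :=
  prod_nonneg fun k _ => by split <;> linarith [hp.1, hp.2]

lemma bernoulliWeight_comp (p : ℝ) (s : α → Bool) (e : Perm α) :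
    bernoulliWeight p (s ∘ e) = bernoulliWeight p s :=
  Equiv.prod_comp e fun k => if s k then p else 1 - p

lemma card_filter_comp (s : α → Bool) (e : Perm α) : #{k | (s ∘ e) k} = #{k | s k} := by
  simp only [card_filter]
  exact Equiv.sum_comp e fun k => if s k then 1 else 0

variable [DecidableEq α]

lemma sum_bernoulliWeight_of_apply (p : ℝ) (i : α) :
    ∑ s : α → Bool, (if s i then bernoulliWeight p s else 0) = p := by
  set g : α → Bool → ℝ := fun k b => if b then p else if k = i then 0 else 1 - p
  have hfactor (s : α → Bool) : (if s i then bernoulliWeight p s else 0) = ∏ k, g k (s k) := by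
    by_cases hi : s i
    · rw [if_pos hi]
      refine prod_congr rfl fun k _ => ?_
      by_cases hk : s k
      · simp [g, hk]
      · have : k ≠ i := by rintro rfl; exact hk hi
        simp [g, hk, this]
    · rw [if_neg hi]
      simp only [Bool.not_eq_true] at hi
      exact (prod_eq_zero (f := fun k => g k (s k)) (mem_univ i) (by simp [g, hi])).symm
  calc ∑ s : α → Bool, (if s i then bernoulliWeight p s else 0)
      = ∑ s : α → Bool, ∏ k, g k (s k) := sum_congr rfl fun s _ => hfactor s
    _ = ∏ k, ∑ b, g k b := (Fintype.prod_sum g).symm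
    _ = ∏ k, if k = i then p else 1 := prod_congr rfl fun k _ => by
        by_cases hk : k = i <;> simp [g, hk]
    _ = p := by simp

noncomputable def pairMass (p : ℝ) (i j : α) : ℝ :=
  ∑ s : α → Bool, if s i ∧ s j then bernoulliWeight p s / #{k | s k} else 0

lemma pairMass_eq_of_ne (p : ℝ) {i j j' : α} (hj : j ≠ i) (hj' : j' ≠ i) :
    pairMass p i j = pairMass p i j' := by
  refine Fintype.sum_equiv ((swap j j').arrowCongr (Equiv.refl Bool)) _ _ fun s => ?_
  change _ = ite ((s ∘ swap j j') i ∧ (s ∘ swap j j') j')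
    (bernoulliWeight p (s ∘ swap j j') / #{k | (s ∘ swap j j') k}) 0
  rw [bernoulliWeight_comp, card_filter_comp, Function.comp_apply, Function.comp_apply,
    swap_apply_of_ne_of_ne hj.symm hj'.symm, swap_apply_right]

lemma sum_pairMass (p : ℝ) (i : α) : ∑ j, pairMass p i j = p := by
  refine Eq.trans ?_ (sum_bernoulliWeight_of_apply p i)
  unfold pairMass
  rw [sum_comm]
  refine sum_congr rfl fun s _ => ?_
  by_cases hi : s i
  · have hS : (#{k | s k} : ℝ) ≠ 0 := by
      exact_mod_cast (card_pos.mpr ⟨i, by simpa using hi⟩).ne'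
    simp only [hi, true_and, if_true]
    rw [← sum_filter, sum_const, nsmul_eq_mul]
    field_simp
  · simp [hi]

lemma div_card_le_pairMass_self {p : ℝ} (hp : p ∈ Set.Icc (0 : ℝ) 1) (i : α) :
    p / Fintype.card α ≤ pairMass p i i := by
  nth_rw 1 [← sum_bernoulliWeight_of_apply p i]
  rw [sum_div]
  refine sum_le_sum fun s _ => ?_
  by_cases hi : s i
  · have hS : 0 < #{k | s k} := card_pos.mpr ⟨i, by simpa using hi⟩
    simp only [hi, and_self, if_true]
    exact div_le_div_of_nonneg_left (bernoulliWeight_nonneg hp s) (Nat.cast_pos.mpr hS)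
      (Nat.cast_le.mpr (card_le_univ _))
  · simp [hi]

lemma pairMass_le {p : ℝ} (hp : p ∈ Set.Icc (0 : ℝ) 1) {i j : α} (hij : i ≠ j) :
    pairMass p i j ≤ p / Fintype.card α := by
  have hn : 1 < Fintype.card α := Fintype.one_lt_card_iff.mpr ⟨i, j, hij⟩
  have hsum : pairMass p i i + (Fintype.card α - 1 : ℝ) * pairMass p i j = p := by
    conv_rhs => rw [← sum_pairMass p i, ← add_sum_erase univ _ (mem_univ i)]
    rw [sum_congr rfl fun j' hj' => pairMass_eq_of_ne p (ne_of_mem_erase hj') hij.symm,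
      sum_const, card_erase_of_mem (mem_univ i), card_univ, nsmul_eq_mul,
      Nat.cast_sub hn.le, Nat.cast_one]
  have hself := div_card_le_pairMass_self hp i
  have hn' : (1 : ℝ) < Fintype.card α := by exact_mod_cast hn
  rw [div_le_iff₀ (by linarith)] at hself
  rw [le_div_iff₀ (by linarith)]
  nlinarith

def shuffles (s : α → Bool) : Finset (Perm α) := {σ | ∀ k, s k = false → σ k = k}

lemma mem_shuffles {s : α → Bool} {σ : Perm α} :
    σ ∈ shuffles s ↔ ∀ k, s k = false → σ k = k := by
  simp [shuffles]

lemma card_shuffles_apply_eq_mul_le {s : α → Bool} (i : α) {j : α} (hj : s j) :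
    #{σ ∈ shuffles s | σ i = j} * #{k | s k} ≤ #(shuffles s) := by
  rw [← card_product]
  refine card_le_card_of_injOn (fun x => swap j x.2 * x.1) ?_ ?_
  · rintro ⟨σ, k⟩ hx
    simp only [coe_product, Set.mem_prod, mem_coe, mem_filter, mem_shuffles, mem_univ,
      true_and] at hx ⊢
    obtain ⟨⟨hfix, -⟩, hk⟩ := hx
    intro m hm
    have hmj : m ≠ j := by rintro rfl; simp [hj] at hm
    have hmk : m ≠ k := by rintro rfl; simp [hk] at hm
    rw [Perm.mul_apply, hfix m hm, swap_apply_of_ne_of_ne hmj hmk]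
  · rintro ⟨σ, k⟩ hx ⟨σ', k'⟩ hx' heq
    simp only [coe_product, Set.mem_prod, mem_coe, mem_filter] at hx hx'
    -- `k` is recovered as the image of `i`
    have hk : k = k' := by
      simpa [hx.1.2, hx'.1.2] using congrArg (fun τ : Perm α => τ i) heq
    subst hk
    simpa using heq

lemma card_shuffles_apply_eq_div_le {s : α → Bool} {i j : α} (hij : i ≠ j) :
    (#{σ ∈ shuffles s | σ i = j} : ℝ) / #(shuffles s) ≤ if s j then (#{k | s k} : ℝ)⁻¹ else 0 := by
  by_cases hj : s j
  · have hS : (0 : ℝ) < #{k | s k} := Nat.cast_pos.mpr (card_pos.mpr ⟨j, by simpa using hj⟩)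
    have hsh : (0 : ℝ) < #(shuffles s) := Nat.cast_pos.mpr (card_pos.mpr ⟨1, by simp [shuffles]⟩)
    rw [if_pos hj, div_le_iff₀ hsh, inv_mul_eq_div, le_div_iff₀ hS]
    exact_mod_cast card_shuffles_apply_eq_mul_le i hj
  · have hempty : {σ ∈ shuffles s | σ i = j} = ∅ :=
      filter_eq_empty_iff.mpr fun σ hσ hσi =>
        hij (σ.injective (hσi.trans (mem_shuffles.mp hσ j (by simpa using hj)).symm))
    simp [hempty, hj]

noncomputable def shuffleDensity (p : ℝ) (x : (α → Bool) × Perm α) : ℝ :=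
  bernoulliWeight p x.1 * if x.2 ∈ shuffles x.1 then (#(shuffles x.1) : ℝ)⁻¹ else 0

lemma shuffleDensity_nonneg {p : ℝ} (hp : p ∈ Set.Icc (0 : ℝ) 1) (x : (α → Bool) × Perm α) :
    0 ≤ shuffleDensity p x :=
  mul_nonneg (bernoulliWeight_nonneg hp x.1) (by split <;> positivity)

lemma sum_shuffleDensity_filter (p : ℝ) (i j : α) :
    ∑ x with x.1 i ∧ x.2 i = j, shuffleDensity p x =
      ∑ s : α → Bool, if s i then
        bernoulliWeight p s * (#{σ ∈ shuffles s | σ i = j} / #(shuffles s)) else 0 := by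
  rw [sum_filter, Fintype.sum_prod_type]
  refine sum_congr rfl fun s _ => ?_
  by_cases hi : s i
  · simp only [hi, true_and, if_true, shuffleDensity, mul_ite, mul_zero, ← sum_filter,
      sum_const, nsmul_eq_mul]
    rw [filter_comm, filter_mem_eq_inter, univ_inter]
    ring
  · simp [hi]

lemma sum_shuffleDensity_le {p : ℝ} (hp : p ∈ Set.Icc (0 : ℝ) 1) {i j : α} (hij : i ≠ j) :
    ∑ x with x.1 i ∧ x.2 i = j, shuffleDensity p x ≤ p / Fintype.card α := by
  rw [sum_shuffleDensity_filter]
  refine le_trans (sum_le_sum fun s _ => ?_) (pairMass_le hp hij)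
  by_cases hi : s i
  · have := mul_le_mul_of_nonneg_left (card_shuffles_apply_eq_div_le (s := s) hij)
      (bernoulliWeight_nonneg hp s)
    by_cases hj : s j <;> simp_all [div_eq_mul_inv]
  · simp [hi]

end

theorem prob_go_to_other_location_general
    (n : ℕ) (p : ℝ) (hp : p ∈ Set.Icc (0 : ℝ) 1)
    (μ : Measure ((Fin n → Bool) × Equiv.Perm (Fin n)))
    (hμ : ∀ (s : Fin n → Bool) (π : Equiv.Perm (Fin n)),
      μ {x | x = (s, π)} =
        ENNReal.ofReal ((∏ i, if s i then p else 1 - p) *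
          (if ∀ i, s i = false → π i = i then
            (1 : ℝ) / (Nat.card {σ : Equiv.Perm (Fin n) // ∀ i, s i = false → σ i = i})
          else 0)))
    (i j : Fin n) (hij : i ≠ j) :
    μ {x | x.1 i = true ∧ x.2 i = j} ≤ ENNReal.ofReal (p / n) := by
  have hdensity (x : (Fin n → Bool) × Perm (Fin n)) :
      μ {x} = ENNReal.ofReal (shuffleDensity p x) := by
    have h := hμ x.1 x.2
    rw [Set.ofPred_eq_eq_singleton] at h
    rw [h]
    simp only [shuffleDensity, bernoulliWeight, shuffles, mem_filter, mem_univ, true_and,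
      Nat.card_eq_fintype_card, Fintype.card_subtype, one_div]
    congr
  calc μ {x | x.1 i = true ∧ x.2 i = j}
      = μ ↑({x : (Fin n → Bool) × Perm (Fin n) | x.1 i = true ∧ x.2 i = j} : Finset _) := by
        rw [coe_filter_univ]
    _ ≤ _ := measure_coe_finset_le_ofReal_sum (shuffleDensity_nonneg hp) hdensity _
    _ ≤ ENNReal.ofReal (p / n) := by
      simpa using ENNReal.ofReal_le_ofReal (sum_shuffleDensity_le hp hij)

/-- In the partially predictable arrival model, each of `n` customers independently
joins the stochastic group with probability `p`, and the members of the stochastic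
group are rearranged by a uniformly random permutation fixing everyone else.  The
probability that customer `i` is in the stochastic group and is sent to a particular
other position `j ≠ i` is at most `p/n`. -/
theorem prob_go_to_other_location
    (n : ℕ) (hn : 2 ≤ n) (p : ℝ) (hp : p ∈ Set.Icc (0 : ℝ) 1)
    (μ : Measure ((Fin n → Bool) × Equiv.Perm (Fin n))) [IsProbabilityMeasure μ]
    (hμ : ∀ (s : Fin n → Bool) (π : Equiv.Perm (Fin n)),
      μ {x | x = (s, π)} =
        ENNReal.ofReal ((∏ i, if s i then p else 1 - p) *
          (if ∀ i, s i = false → π i = i then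
            (1 : ℝ) / (Nat.card {σ : Equiv.Perm (Fin n) // ∀ i, s i = false → σ i = i})
          else 0)))
    (i j : Fin n) (hij : i ≠ j) :
    μ {x | x.1 i = true ∧ x.2 i = j} ≤ ENNReal.ofReal (p / n) :=
  prob_go_to_other_location_general n p hp μ hμ i j hij
end

section
/- Let a, p ∈ (0,1) and set θ = (1−p)/(2−a). Let b > 0, n₁ ≥ 0, Δ ≥ 0, and let q_e, q_f be reals with 0 ≤ q_f ≤ θ·b and 0 ≤ q_e ≤ p·max(b − n₁, 0) + Δ. Let OPT be a real with a·b ≤ OPT ≤ b − (1−a)·max(b − n₁, 0). Then (b − (1−a)·(q_e + q_f)) / OPT ≥ p + (1−p)/(2−a) − (1−a)·Δ/(a·b). -/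
/-- Arithmetic core of Lemma 4.3 (claim:full-case-comp1): competitive-ratio bound for
the non-adaptive algorithm when it exhausts the inventory. -/
theorem nonadaptive_exhausted_ratio
    (a p b n₁ Δ qe qf OPT : ℝ)
    (ha : a ∈ Set.Ioo (0 : ℝ) 1) (hp : p ∈ Set.Ioo (0 : ℝ) 1)
    (hb : 0 < b) (hn₁ : 0 ≤ n₁) (hΔ : 0 ≤ Δ)
    (hqf0 : 0 ≤ qf) (hqf : qf ≤ (1 - p) / (2 - a) * b)
    (hqe0 : 0 ≤ qe) (hqe : qe ≤ p * max (b - n₁) 0 + Δ)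
    (hOPT1 : a * b ≤ OPT) (hOPT2 : OPT ≤ b - (1 - a) * max (b - n₁) 0) :
    (b - (1 - a) * (qe + qf)) / OPT ≥ p + (1 - p) / (2 - a) - (1 - a) * Δ / (a * b) := by
  obtain ⟨ha0, ha1⟩ := ha
  obtain ⟨hp0, hp1⟩ := hp
  set m := max (b - n₁) 0 with hm
  have hm0 : 0 ≤ m := le_max_right _ _
  have hmb : m ≤ b := by
    rcases max_cases (b - n₁) 0 with ⟨h1, _⟩ | ⟨h1, _⟩ <;> rw [hm, h1] <;> linarith
  have h2a : (0:ℝ) < 2 - a := by linarith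
  set θ := (1 - p) / (2 - a) with hθdef
  have hθ0 : 0 < θ := div_pos (by linarith) h2a
  have hθeq : θ * (2 - a) = 1 - p := div_mul_cancel₀ _ (ne_of_gt h2a)
  have hab : 0 < a * b := mul_pos ha0 hb
  have hOPTpos : 0 < OPT := lt_of_lt_of_le hab hOPT1
  -- step 1: lower bound numerator
  have h1 : (b - (1 - a) * (p * m + Δ + θ * b)) / OPT ≤ (b - (1 - a) * (qe + qf)) / OPT := by
    apply div_le_div_of_nonneg_right ?_ hOPTpos.le
    nlinarith [mul_le_mul_of_nonneg_left (add_le_add hqe hqf) (by linarith : (0:ℝ) ≤ 1 - a)]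
  -- step 2: split
  have hsplit : (b - (1 - a) * (p * m + Δ + θ * b)) / OPT
      = (b - (1 - a) * (p * m + θ * b)) / OPT - (1 - a) * Δ / OPT := by
    field_simp
    ring
  -- step 3: main ratio
  have h3 : p + θ ≤ (b - (1 - a) * (p * m + θ * b)) / OPT := by
    rw [le_div_iff₀ hOPTpos]
    have key : (p + θ) * OPT ≤ (p + θ) * (b - (1 - a) * m) :=
      mul_le_mul_of_nonneg_left hOPT2 (by positivity)
    nlinarith [mul_nonneg (mul_nonneg hθ0.le (by linarith : (0:ℝ) ≤ 1 - a)) hm0]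
  -- step 4: Δ term
  have h4 : (1 - a) * Δ / OPT ≤ (1 - a) * Δ / (a * b) := by
    exact div_le_div_of_nonneg_left (mul_nonneg (by linarith) hΔ) hab hOPT1
  calc p + θ - (1 - a) * Δ / (a * b)
      ≤ (b - (1 - a) * (p * m + θ * b)) / OPT - (1 - a) * Δ / OPT := by linarith
    _ = (b - (1 - a) * (p * m + Δ + θ * b)) / OPT := hsplit.symm
    _ ≤ (b - (1 - a) * (qe + qf)) / OPT := h1
end

section
/- Let a, p ∈ (0,1) and set θ = (1−p)/(2−a). Let b > 0 and Δ ≥ 0, and let n₁, n₂ ≥ 0 satisfy n₁ + n₂ ≤ b and n₂ ≥ θ·b. Let q be a real with q ≥ max( p·(n₁+n₂) − n₁ − 5Δ, 0 ). Then (n₁ + a·(q + θ·b)) / (n₁ + a·n₂) ≥ p + (1−p)/(2−a) − 5Δ/(θ·b). -/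
/-- Arithmetic core of case (c) of Lemma 4.5 (claim:full-comp2): competitive-ratio
bound for the non-adaptive algorithm when the inventory is not exhausted. -/
theorem nonadaptive_not_exhausted_ratio
    (a p b Δ n₁ n₂ q : ℝ)
    (ha : a ∈ Set.Ioo (0 : ℝ) 1) (hp : p ∈ Set.Ioo (0 : ℝ) 1)
    (hb : 0 < b) (hΔ : 0 ≤ Δ) (hn₁ : 0 ≤ n₁) (hn₂ : 0 ≤ n₂)
    (hsum : n₁ + n₂ ≤ b) (hn₂b : (1 - p) / (2 - a) * b ≤ n₂)
    (hq : max (p * (n₁ + n₂) - n₁ - 5 * Δ) 0 ≤ q) :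
    (n₁ + a * (q + (1 - p) / (2 - a) * b)) / (n₁ + a * n₂)
      ≥ p + (1 - p) / (2 - a) - 5 * Δ / ((1 - p) / (2 - a) * b) := by
  obtain ⟨ha0, ha1⟩ := ha
  obtain ⟨hp0, hp1⟩ := hp
  set t : ℝ := (1 - p) / (2 - a) with htdef
  have h2a : 0 < 2 - a := by linarith
  have ht : 0 < t := div_pos (by linarith) h2a
  have htb : 0 < t * b := mul_pos ht hb
  have ht2 : t * (2 - a) = 1 - p := div_mul_cancel₀ _ (ne_of_gt h2a)
  have hD : 0 < n₁ + a * n₂ := by nlinarith [mul_pos ha0 htb]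
  rw [ge_iff_le, le_div_iff₀ hD]
  have hs : 5 * Δ / (t * b) * (t * b) = 5 * Δ := div_mul_cancel₀ _ (ne_of_gt htb)
  have hs0 : 0 ≤ 5 * Δ / (t * b) := div_nonneg (by linarith) (le_of_lt htb)
  have hqa : a * (p * (n₁ + n₂) - n₁ - 5 * Δ) ≤ a * q :=
    mul_le_mul_of_nonneg_left (le_trans (le_max_left _ _) hq) (le_of_lt ha0)
  have hslack : 5 * Δ / (t * b) * (a * (t * b)) ≤ 5 * Δ / (t * b) * (n₁ + a * n₂) := by
    have : a * (t * b) ≤ n₁ + a * n₂ := by nlinarith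
    exact mul_le_mul_of_nonneg_left this hs0
  have hdet : 0 ≤ n₁ * (1 - a) * (1 - p - t) := by
    have : t ≤ 1 - p := by
      rw [htdef, div_le_iff₀ h2a]; nlinarith
    apply mul_nonneg (mul_nonneg hn₁ (by linarith)) (by linarith)
  nlinarith [mul_nonneg (mul_nonneg (le_of_lt ha0) (le_of_lt ht)) (by linarith : (0:ℝ) ≤ b - n₂ - n₁), mul_comm (5 * Δ / (t * b)) (t * b)]
end

section
/- Let a, p ∈ (0,1), c ∈ (0,1], δ ∈ (0,1], b > 0, n₁ ≥ 0, and Δ ≥ 1. Let q be a real with 0 ≤ q ≤ (1−c)/(1−a)·b + c·max(b − n₁, 0) + 2cΔ/(δp) + 1, and let OPT be a real with a·b ≤ OPT ≤ b − (1−a)·max(b − n₁, 0). Then (b − (1−a)·q) / OPT ≥ c − 3Δ/(a·b·δ·p). -/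
/-- Arithmetic core of case (b) of the lemma claim:q1+q2=b-ADP-ratio: competitive-ratio
bound for the adaptive algorithm when it exhausts the inventory. -/
theorem adaptive_exhausted_ratio
    (a p c δ b n₁ Δ q OPT : ℝ)
    (ha : a ∈ Set.Ioo (0 : ℝ) 1) (hp : p ∈ Set.Ioo (0 : ℝ) 1)
    (hc : c ∈ Set.Ioc (0 : ℝ) 1) (hδ : δ ∈ Set.Ioc (0 : ℝ) 1)
    (hb : 0 < b) (hn₁ : 0 ≤ n₁) (hΔ : 1 ≤ Δ)
    (hq0 : 0 ≤ q)
    (hq : q ≤ (1 - c) / (1 - a) * b + c * max (b - n₁) 0 + 2 * c * Δ / (δ * p) + 1)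
    (hOPT1 : a * b ≤ OPT) (hOPT2 : OPT ≤ b - (1 - a) * max (b - n₁) 0) :
    (b - (1 - a) * q) / OPT ≥ c - 3 * Δ / (a * b * δ * p) := by
  obtain ⟨ha0, ha1⟩ := ha
  obtain ⟨hp0, hp1⟩ := hp
  obtain ⟨hc0, hc1⟩ := hc
  obtain ⟨hδ0, hδ1⟩ := hδ
  set M := max (b - n₁) 0 with hMdef
  have hM : 0 ≤ M := le_max_right _ _
  have hdp : 0 < δ * p := mul_pos hδ0 hp0
  have hdp1 : δ * p ≤ 1 := by nlinarith
  have hab : 0 < a * b := mul_pos ha0 hb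
  have hO : 0 < OPT := lt_of_lt_of_le hab hOPT1
  have h1a : 0 < 1 - a := by linarith
  rw [ge_iff_le, le_div_iff₀ hO]
  -- key1 : (1-a)*q ≤ (1-c)*b + (1-a)*c*M + (2*c*Δ*(1-a))/(δ*p) + (1-a)
  have key1 : (1 - a) * q ≤ (1 - c) * b + (1 - a) * (c * M) + (2 * c * Δ * (1 - a)) / (δ * p) + (1 - a) := by
    have h := mul_le_mul_of_nonneg_left hq h1a.le
    have e : (1 - a) * ((1 - c) / (1 - a) * b + c * M + 2 * c * Δ / (δ * p) + 1)
        = (1 - c) * b + (1 - a) * (c * M) + (2 * c * Δ * (1 - a)) / (δ * p) + (1 - a) := by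
      field_simp
    linarith [e ▸ h]
  -- key2 : (2*c*Δ*(1-a))/(δ*p) + (1-a) ≤ 3*Δ/(δ*p)
  have key2 : (2 * c * Δ * (1 - a)) / (δ * p) + (1 - a) ≤ 3 * Δ / (δ * p) := by
    rw [div_add' _ _ _ hdp.ne', div_le_div_iff₀ hdp hdp]
    have hca : c * (1 - a) ≤ 1 := by nlinarith [mul_le_mul_of_nonneg_right hc1 h1a.le]
    have h1 : 2 * c * Δ * (1 - a) ≤ 2 * Δ := by
      nlinarith [mul_le_mul_of_nonneg_left hca (by linarith : (0:ℝ) ≤ 2 * Δ)]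
    have h2 : (1 - a) * (δ * p) ≤ Δ := by
      nlinarith [mul_le_mul_of_nonneg_right (by linarith : 1 - a ≤ 1) hdp.le]
    nlinarith [mul_le_mul_of_nonneg_right
      (show 2 * c * Δ * (1 - a) + (1 - a) * (δ * p) ≤ 3 * Δ by linarith) hdp.le]
  -- key3 : 3*Δ/(a*b*δ*p) * (a*b) = 3*Δ/(δ*p)
  have key3 : 3 * Δ / (a * b * δ * p) * (a * b) = 3 * Δ / (δ * p) := by
    field_simp
  have hK : 0 ≤ 3 * Δ / (a * b * δ * p) := by positivity
  have key4 : 3 * Δ / (δ * p) ≤ 3 * Δ / (a * b * δ * p) * OPT := by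
    rw [← key3]
    exact mul_le_mul_of_nonneg_left hOPT1 hK
  have key5 : c * OPT ≤ c * (b - (1 - a) * M) :=
    mul_le_mul_of_nonneg_left hOPT2 hc0.le
  have e2 : c * (b - (1 - a) * M) = c * b - (1 - a) * (c * M) := by ring
  have e3 : (c - 3 * Δ / (a * b * δ * p)) * OPT = c * OPT - 3 * Δ / (a * b * δ * p) * OPT := by
    ring
  linarith
end

section
/- Let a, p ∈ (0,1) and set θ = (1−p)/(2−a). Let b > 0 and K ≥ 0, and let n₁, n₂ ≥ 0 satisfy n₁ + n₂ ≤ b and n₂ ≥ θ·b. Let q be a real with q ≥ max( p·n₂ − K, 0 ). Then (n₁ + a·(q + θ·b)) / (n₁ + a·n₂) ≥ p + (1−p)/(2−a) − K/(θ·b). -/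
/-- Arithmetic core of case (c) of Lemma 4.7 (claim:full-comp3): competitive-ratio
bound for the non-adaptive algorithm when the number of type-1 customers is small. -/
theorem nonadaptive_small_n1_ratio
    (a p b K n₁ n₂ q : ℝ)
    (ha : a ∈ Set.Ioo (0 : ℝ) 1) (hp : p ∈ Set.Ioo (0 : ℝ) 1)
    (hb : 0 < b) (hK : 0 ≤ K) (hn₁ : 0 ≤ n₁) (hn₂ : 0 ≤ n₂)
    (hsum : n₁ + n₂ ≤ b) (hn₂b : (1 - p) / (2 - a) * b ≤ n₂)
    (hq : max (p * n₂ - K) 0 ≤ q) :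
    (n₁ + a * (q + (1 - p) / (2 - a) * b)) / (n₁ + a * n₂)
      ≥ p + (1 - p) / (2 - a) - K / ((1 - p) / (2 - a) * b) := by
  obtain ⟨ha0, ha1⟩ := ha
  obtain ⟨hp0, hp1⟩ := hp
  have h2a : (0 : ℝ) < 2 - a := by linarith
  set θ : ℝ := (1 - p) / (2 - a) with hθ
  have hθ0 : 0 < θ := div_pos (by linarith) h2a
  have hθb : 0 < θ * b := mul_pos hθ0 hb
  have hθlt : θ * (2 - a) = 1 - p := div_mul_cancel₀ _ (ne_of_gt h2a)
  have hq' : p * n₂ - K ≤ q := le_trans (le_max_left _ _) hq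
  have hq0 : 0 ≤ q := le_trans (le_max_right _ _) hq
  have hD : 0 < n₁ + a * n₂ :=
    lt_of_lt_of_le (mul_pos ha0 (lt_of_lt_of_le hθb hn₂b))
      (by nlinarith)
  set c : ℝ := K / (θ * b) with hc
  have hc0 : 0 ≤ c := div_nonneg hK (le_of_lt hθb)
  have hcK : c * (θ * b) = K := div_mul_cancel₀ _ (ne_of_gt hθb)
  rw [ge_iff_le, le_div_iff₀ hD]
  have key : c * (n₁ + a * n₂) ≥ a * K := by
    have h1 : a * n₂ ≥ a * (θ * b) := by nlinarith
    nlinarith [mul_nonneg hc0 (sub_nonneg.mpr h1), mul_nonneg hc0 hn₁]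
  nlinarith [mul_nonneg hn₁ hθ0.le, mul_nonneg (mul_nonneg ha0.le hθ0.le) (sub_nonneg.mpr hsum)]
end

section
/- Let p ∈ (0,1), n ≥ 0, b > 0, Δ ≥ 0, and let n₁, n₂ ≥ 0 satisfy n₁ + n₂ ≤ b and n₁ < b. Let λ̄ and λ be reals with (n₁·(1−p) + 3Δ)/(p·(b − n₁)) ≤ λ̄ ≤ λ ≤ 1, and let η₁ be a real with 0 ≤ η₁ ≤ n₁. If x, y, z are reals with x ≤ λ·p·n₁ + (1−p)·η₁ + Δ, y ≤ λ·p·n₂ + Δ, and z ≥ λ̄·p·n₂ − Δ, then x + y − z ≤ λ·p·b. -/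
/-- Key inequality in the proof of Lemma 4.4 (lem:HYB:full-case2): a gap below the
evolving threshold `λ·p·b` from time `λ̄` onward. -/
theorem evolving_threshold_gap
    (p n b Δ n₁ n₂ lamBar lam η₁ x y z : ℝ)
    (hp : p ∈ Set.Ioo (0 : ℝ) 1)
    (hn : 0 ≤ n) (hb : 0 < b) (hΔ : 0 ≤ Δ)
    (hn₁ : 0 ≤ n₁) (hn₂ : 0 ≤ n₂)
    (hsum : n₁ + n₂ ≤ b) (hn₁b : n₁ < b)
    (hlamBar : (n₁ * (1 - p) + 3 * Δ) / (p * (b - n₁)) ≤ lamBar)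
    (hll : lamBar ≤ lam) (hlam1 : lam ≤ 1)
    (hη₁0 : 0 ≤ η₁) (hη₁ : η₁ ≤ n₁)
    (hx : x ≤ lam * p * n₁ + (1 - p) * η₁ + Δ)
    (hy : y ≤ lam * p * n₂ + Δ)
    (hz : lamBar * p * n₂ - Δ ≤ z) :
    x + y - z ≤ lam * p * b := by
  obtain ⟨hp0, hp1⟩ := hp
  have hpos : 0 < p * (b - n₁) := mul_pos hp0 (by linarith)
  have hkey : n₁ * (1 - p) + 3 * Δ ≤ lamBar * (p * (b - n₁)) :=
    (div_le_iff₀ hpos).mp hlamBar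
  nlinarith [mul_nonneg hp0.le (sub_nonneg.mpr hll),
    mul_nonneg (mul_nonneg (sub_nonneg.mpr hll) hp0.le)
      (sub_nonneg.mpr (by linarith : n₂ ≤ b - n₁)),
    mul_nonneg (sub_nonneg.mpr hp1.le) (sub_nonneg.mpr hη₁)]
end
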